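/- No two distinct kissing configurations among D5, L5, Q5, R5 are isometric, because the number of antipodal pairs is an isometry invariant and these configurations contain 40, 24, 20, and 12 points belonging to antipodal pairs, respectively. -/
import Mathlib

open Finset


/-- The D5 root system: vectors in ℝ^5 with exactly two nonzero coordinates, each ±1. -/
def D5 : Set (Fin 5 → ℝ) :=
  {v | (∀ i, v i = -1 ∨ v i = 0 ∨ v i = 1) ∧
    (Finset.univ.filter fun i => v i ≠ 0).card = 2}

/-- Leech's five-dimensional kissing configuration `L5`. -/
def L5 : Set (Fin 5 → ℝ) :=
  {v | (v 4 = 0 ∧ (∀ i, v i = -1 ∨ v i = 0 ∨ v i = 1) ∧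
          (Finset.univ.filter fun i => v i ≠ 0).card = 2)
     ∨ (v 4 = 1 ∧ (∀ i : Fin 4, v i.castSucc = 1/2 ∨ v i.castSucc = -(1/2)) ∧
          Odd (Finset.univ.filter fun i : Fin 4 => v i.castSucc = -(1/2)).card)
     ∨ (v 4 = -1 ∧ (∀ i : Fin 4, v i.castSucc = -1 ∨ v i.castSucc = 0 ∨ v i.castSucc = 1) ∧
          (Finset.univ.filter fun i : Fin 4 => v i.castSucc ≠ 0).card = 1)}

/-- Szöllősi's configuration `Q5`: keep the `D5` roots of coordinate sum `≤ 0` and replace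
the layer of coordinate sum `2` with the reflection of the layer of coordinate sum `-2`
across the hyperplane of coordinate sum `0` (reflection adds `4/5` to each coordinate). -/
def Q5 : Set (Fin 5 → ℝ) :=
  {v | v ∈ D5 ∧ ∑ i, v i ≤ 0} ∪
  {v | ∃ u ∈ D5, (∑ i, u i) = -2 ∧ v = fun i => u i + 4/5}

/-- The new configuration `R5`: the same modification applied to `L5`. -/
def R5 : Set (Fin 5 → ℝ) :=
  {v | v ∈ L5 ∧ ∑ i, v i ≤ 0} ∪
  {v | ∃ u ∈ L5, (∑ i, u i) = -2 ∧ v = fun i => u i + 4/5}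

/-- The number of points of `S` that belong to an antipodal pair. -/
noncomputable def antipodalCount (S : Set (Fin 5 → ℝ)) : ℕ := Set.ncard {v | v ∈ S ∧ -v ∈ S}

section aux
def e (f : Fin 5 → Fin 3) : Fin 5 → ℝ := fun i => (f i : ℝ) - 1

lemma fin3 (a : Fin 3) : a = 0 ∨ a = 1 ∨ a = 2 := by omega

lemma e_inj : Function.Injective e := by
  intro f g h
  funext i
  have h2 := congrFun h i
  simp only [e, sub_left_inj] at h2
  have : (f i : ℕ) = (g i : ℕ) := by exact_mod_cast h2
  exact Fin.ext this

lemma e_mem3 (f : Fin 5 → Fin 3) (i : Fin 5) : e f i = -1 ∨ e f i = 0 ∨ e f i = 1 := by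
  rcases fin3 (f i) with h|h|h <;> simp [e, h] <;> norm_num

lemma e_eq0 (f : Fin 5 → Fin 3) (i : Fin 5) : e f i = 0 ↔ f i = 1 := by
  rcases fin3 (f i) with h|h|h <;> simp [e, h] <;> norm_num

lemma e_sum (f : Fin 5 → Fin 3) : ∑ i, e f i = ((∑ i, (f i : ℕ) : ℕ) : ℝ) - 5 := by
  simp only [e, Finset.sum_sub_distrib]
  push_cast
  norm_num

lemma exists_fin3 {v : Fin 5 → ℝ} (h : ∀ i, v i = -1 ∨ v i = 0 ∨ v i = 1) : ∃ f, e f = v := by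
  refine ⟨fun i => if v i = -1 then 0 else if v i = 0 then 1 else 2, funext fun i => ?_⟩
  rcases h i with h|h|h <;> simp [e, h] <;> norm_num

lemma card_eq (f : Fin 5 → Fin 3) :
    (univ.filter fun i => e f i ≠ 0).card = (univ.filter fun i => f i ≠ 1).card := by
  congr 1
  apply filter_congr
  intro i _
  simp [e_eq0]

/-- D5 membership for e f -/
lemma e_mem_D5 (f : Fin 5 → Fin 3) : e f ∈ D5 ↔ (univ.filter fun i => f i ≠ 1).card = 2 := by
  constructor
  · rintro ⟨-, h⟩; rwa [card_eq] at h
  · intro h; exact ⟨e_mem3 f, by rwa [card_eq]⟩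

lemma D5_neg {v : Fin 5 → ℝ} (h : v ∈ D5) : -v ∈ D5 := by
  obtain ⟨h1, h2⟩ := h
  refine ⟨fun i => ?_, ?_⟩
  · rcases h1 i with h|h|h <;> simp [h]
  · rw [← h2]; congr 1; apply filter_congr; intro i _; simp

lemma anti_D5 : {v | v ∈ D5 ∧ -v ∈ D5} =
    e '' ((univ : Finset (Fin 5 → Fin 3)).filter fun f => (univ.filter fun i => f i ≠ 1).card = 2) := by
  ext v
  constructor
  · rintro ⟨hv, -⟩
    obtain ⟨f, rfl⟩ := exists_fin3 hv.1
    exact ⟨f, by simpa using (e_mem_D5 f).1 hv, rfl⟩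
  · rintro ⟨f, hf, rfl⟩
    simp only [Finset.coe_filter, Set.mem_setOf_eq] at hf
    have hd : e f ∈ D5 := (e_mem_D5 f).2 hf.2
    exact ⟨hd, D5_neg hd⟩

/-- middle layer of L5 -/
def M : Set (Fin 5 → ℝ) :=
  {v | v 4 = 0 ∧ (∀ i, v i = -1 ∨ v i = 0 ∨ v i = 1) ∧
    (Finset.univ.filter fun i => v i ≠ 0).card = 2}

lemma M_neg {v : Fin 5 → ℝ} (h : v ∈ M) : -v ∈ M := by
  obtain ⟨h0, hd⟩ := h
  exact ⟨by simp [h0], (D5_neg hd).1, (D5_neg hd).2⟩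

lemma M_subset_L5 : M ⊆ L5 := fun v h => Or.inl h

lemma anti_L5 : {v | v ∈ L5 ∧ -v ∈ L5} = M := by
  ext v
  constructor
  · rintro ⟨hv, hnv⟩
    rcases hv with h|h|h
    · exact h
    · exfalso
      rcases hnv with g|g|g
      · have := g.1; simp only [Pi.neg_apply, h.1] at this; norm_num at this
      · have := g.1; simp only [Pi.neg_apply, h.1] at this; norm_num at this
      · have h0 := h.2.1 0
        have g0 := g.2.1 0
        simp only [Pi.neg_apply] at g0
        rcases h0 with h0|h0 <;> rw [h0] at g0 <;> rcases g0 with g0|g0|g0 <;> norm_num at g0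
    · exfalso
      rcases hnv with g|g|g
      · have := g.1; simp only [Pi.neg_apply, h.1] at this; norm_num at this
      · have h0 := h.2.1 0
        have g0 := g.2.1 0
        simp only [Pi.neg_apply] at g0
        rcases h0 with h0|h0|h0 <;> rw [h0] at g0 <;> rcases g0 with g0|g0 <;> norm_num at g0
      · have := g.1; simp only [Pi.neg_apply, h.1] at this; norm_num at this
  · intro h
    exact ⟨M_subset_L5 h, M_subset_L5 (M_neg h)⟩

lemma e_mem_M (f : Fin 5 → Fin 3) :
    e f ∈ M ↔ f 4 = 1 ∧ (univ.filter fun i => f i ≠ 1).card = 2 := by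
  constructor
  · rintro ⟨h0, -, h2⟩
    exact ⟨(e_eq0 f 4).1 h0, by rwa [card_eq] at h2⟩
  · rintro ⟨h0, h2⟩
    exact ⟨(e_eq0 f 4).2 h0, e_mem3 f, by rwa [card_eq]⟩

lemma anti_M_eq : M = e '' ((univ : Finset (Fin 5 → Fin 3)).filter fun f =>
    f 4 = 1 ∧ (univ.filter fun i => f i ≠ 1).card = 2) := by
  ext v
  constructor
  · intro hv
    obtain ⟨f, rfl⟩ := exists_fin3 hv.2.1
    exact ⟨f, by simpa using (e_mem_M f).1 hv, rfl⟩
  · rintro ⟨f, hf, rfl⟩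
    simp only [Finset.coe_filter, Set.mem_setOf_eq] at hf
    exact (e_mem_M f).2 hf.2
end aux

section aux2
lemma shifted_not_Q5 {u : Fin 5 → ℝ} (hu : u ∈ D5) :
    -(fun i => u i + 4/5) ∉ Q5 := by
  rintro (⟨hd, -⟩|⟨w, hw, -, hw2⟩)
  · have h0 := hd.1 0
    simp only [Pi.neg_apply] at h0
    rcases hu.1 0 with h|h|h <;> rw [h] at h0 <;> rcases h0 with h0|h0|h0 <;> norm_num at h0
  · have h0 := congrFun hw2 0
    simp only [Pi.neg_apply] at h0
    rcases hu.1 0 with h|h|h <;> rw [h] at h0 <;> rcases hw.1 0 with g|g|g <;> rw [g] at h0 <;> norm_num at h0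

lemma anti_Q5 : {v | v ∈ Q5 ∧ -v ∈ Q5} = e '' ((univ : Finset (Fin 5 → Fin 3)).filter fun f =>
    (univ.filter fun i => f i ≠ 1).card = 2 ∧ (∑ i, (f i : ℕ)) = 5) := by
  ext v
  constructor
  · rintro ⟨hv, hnv⟩
    rcases hv with ⟨hvD, hvs⟩|⟨u, hu, hus, rfl⟩
    · rcases hnv with ⟨hnD, hns⟩|⟨u, hu, hus, hv2⟩
      · have hsum : ∑ i, v i = 0 := by
          have : ∑ i, (-v) i = -∑ i, v i := by simp
          rw [this] at hns; linarith
        obtain ⟨f, rfl⟩ := exists_fin3 hvD.1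
        refine ⟨f, ?_, rfl⟩
        simp only [Finset.coe_filter, Set.mem_setOf_eq, Finset.mem_univ, true_and]
        refine ⟨(e_mem_D5 f).1 hvD, ?_⟩
        rw [e_sum] at hsum
        have : ((∑ i, (f i : ℕ) : ℕ) : ℝ) = 5 := by linarith
        exact_mod_cast this
      · exfalso
        have : -(fun i => u i + 4/5) ∉ Q5 := shifted_not_Q5 hu
        rw [← hv2, neg_neg] at this
        exact this (Or.inl ⟨hvD, hvs⟩)
    · exact absurd hnv (shifted_not_Q5 hu)
  · rintro ⟨f, hf, rfl⟩
    simp only [Finset.coe_filter, Set.mem_setOf_eq, Finset.mem_univ, true_and] at hf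
    have hd : e f ∈ D5 := (e_mem_D5 f).2 hf.1
    have hs : ∑ i, e f i = 0 := by rw [e_sum, hf.2]; norm_num
    have hns : ∑ i, (-(e f)) i = 0 := by simp [hs]
    exact ⟨Or.inl ⟨hd, le_of_eq hs⟩, Or.inl ⟨D5_neg hd, le_of_eq hns⟩⟩

lemma L5_coord4 {u : Fin 5 → ℝ} (hu : u ∈ L5) : u 4 = 0 ∨ u 4 = 1 ∨ u 4 = -1 := by
  rcases hu with h|h|h
  · exact Or.inl h.1
  · exact Or.inr (Or.inl h.1)
  · exact Or.inr (Or.inr h.1)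

lemma shifted_not_R5 {u : Fin 5 → ℝ} (hu : u ∈ L5) :
    -(fun i => u i + 4/5) ∉ R5 := by
  rintro (⟨hL, -⟩|⟨w, hw, -, hw2⟩)
  · have h0 := L5_coord4 hL
    simp only [Pi.neg_apply] at h0
    rcases L5_coord4 hu with h|h|h <;> rw [h] at h0 <;> rcases h0 with h0|h0|h0 <;> norm_num at h0
  · have h0 := congrFun hw2 4
    simp only [Pi.neg_apply] at h0
    rcases L5_coord4 hu with h|h|h <;> rw [h] at h0 <;> rcases L5_coord4 hw with g|g|g <;> rw [g] at h0 <;> norm_num at h0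

lemma anti_R5 : {v | v ∈ R5 ∧ -v ∈ R5} = e '' ((univ : Finset (Fin 5 → Fin 3)).filter fun f =>
    (f 4 = 1 ∧ (univ.filter fun i => f i ≠ 1).card = 2) ∧ (∑ i, (f i : ℕ)) = 5) := by
  ext v
  constructor
  · rintro ⟨hv, hnv⟩
    rcases hv with ⟨hvL, hvs⟩|⟨u, hu, hus, rfl⟩
    · rcases hnv with ⟨hnL, hns⟩|⟨u, hu, hus, hv2⟩
      · have hM : v ∈ M := by
          rw [← anti_L5]; exact ⟨hvL, hnL⟩
        have hsum : ∑ i, v i = 0 := by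
          have : ∑ i, (-v) i = -∑ i, v i := by simp
          rw [this] at hns; linarith
        obtain ⟨f, rfl⟩ := exists_fin3 hM.2.1
        refine ⟨f, ?_, rfl⟩
        simp only [Finset.coe_filter, Set.mem_setOf_eq, Finset.mem_univ, true_and]
        refine ⟨(e_mem_M f).1 hM, ?_⟩
        rw [e_sum] at hsum
        have : ((∑ i, (f i : ℕ) : ℕ) : ℝ) = 5 := by linarith
        exact_mod_cast this
      · exfalso
        have : -(fun i => u i + 4/5) ∉ R5 := shifted_not_R5 hu
        rw [← hv2, neg_neg] at this
        exact this (Or.inl ⟨hvL, hvs⟩)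
    · exact absurd hnv (shifted_not_R5 hu)
  · rintro ⟨f, hf, rfl⟩
    simp only [Finset.coe_filter, Set.mem_setOf_eq, Finset.mem_univ, true_and] at hf
    have hm : e f ∈ M := (e_mem_M f).2 hf.1
    have hs : ∑ i, e f i = 0 := by rw [e_sum, hf.2]; norm_num
    have hns : ∑ i, (-(e f)) i = 0 := by simp [hs]
    exact ⟨Or.inl ⟨M_subset_L5 hm, le_of_eq hs⟩,
      Or.inl ⟨M_subset_L5 (M_neg hm), le_of_eq hns⟩⟩

lemma count_image (F : Finset (Fin 5 → Fin 3)) : (e '' ↑F).ncard = F.card := by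
  rw [Set.ncard_image_of_injective _ e_inj, Set.ncard_coe_finset]

lemma antipodal_invariant {S T : Set (Fin 5 → ℝ)} (A : Matrix (Fin 5) (Fin 5) ℝ)
    (hA : A * A.transpose = 1) (him : A.mulVec '' S = T) :
    antipodalCount S = antipodalCount T := by
  have hA' : A.transpose * A = 1 := mul_eq_one_comm.mp hA
  have hinj : Function.Injective A.mulVec := by
    intro x y hxy
    have := congrArg A.transpose.mulVec hxy
    rwa [Matrix.mulVec_mulVec, Matrix.mulVec_mulVec, hA', Matrix.one_mulVec,
      Matrix.one_mulVec] at this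
  have hset : {w | w ∈ T ∧ -w ∈ T} = A.mulVec '' {v | v ∈ S ∧ -v ∈ S} := by
    ext w
    constructor
    · rintro ⟨hw, hnw⟩
      rw [← him] at hw hnw
      obtain ⟨v, hv, rfl⟩ := hw
      obtain ⟨v', hv', hv'2⟩ := hnw
      have : v' = -v := by
        apply hinj
        rw [hv'2, Matrix.mulVec_neg]
      rw [this] at hv'
      exact ⟨v, ⟨hv, hv'⟩, rfl⟩
    · rintro ⟨v, ⟨hv, hnv⟩, rfl⟩
      constructor
      · rw [← him]; exact ⟨v, hv, rfl⟩
      · rw [← him, ← Matrix.mulVec_neg]; exact ⟨-v, hnv, rfl⟩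
  unfold antipodalCount
  rw [hset, Set.ncard_image_of_injective _ hinj]
end aux2

theorem stmt11 :
    antipodalCount D5 = 40 ∧ antipodalCount L5 = 24 ∧
    antipodalCount Q5 = 20 ∧ antipodalCount R5 = 12 ∧
    List.Pairwise
      (fun S T : Set (Fin 5 → ℝ) =>
        ¬ ∃ A : Matrix (Fin 5) (Fin 5) ℝ, A * A.transpose = 1 ∧ A.mulVec '' S = T)
      [D5, L5, Q5, R5] := by
  have cD : antipodalCount D5 = 40 := by
    unfold antipodalCount; rw [anti_D5, count_image]; decide
  have cL : antipodalCount L5 = 24 := by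
    unfold antipodalCount; rw [anti_L5, anti_M_eq, count_image]; decide
  have cQ : antipodalCount Q5 = 20 := by
    unfold antipodalCount; rw [anti_Q5, count_image]; decide
  have cR : antipodalCount R5 = 12 := by
    unfold antipodalCount; rw [anti_R5, count_image]; decide
  refine ⟨cD, cL, cQ, cR, ?_⟩
  simp only [List.pairwise_cons, List.mem_cons, List.mem_singleton, List.not_mem_nil]
  refine ⟨fun T hT => ?_, fun T hT => ?_, fun T hT => ?_, fun _ h => h.elim, List.Pairwise.nil⟩
  · rintro ⟨A, hA, him⟩
    have h := antipodal_invariant A hA him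
    rcases hT with rfl|rfl|rfl|hF <;> first | omega | exact hF.elim
  · rintro ⟨A, hA, him⟩
    have h := antipodal_invariant A hA him
    rcases hT with rfl|rfl|hF <;> first | omega | exact hF.elim
  · rintro ⟨A, hA, him⟩
    have h := antipodal_invariant A hA him
    rcases hT with rfl|hF <;> first | omega | exact hF.elim
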